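/- The curved Dunkl momenta transform as a vector under the Dunkl angular momenta: [Λ̂_{ij}, Γ̂_k^{(κ)}] = iℏ(δ_{ik}(1 + 2μᵢR̂ᵢ)Γ̂ⱼ^{(κ)} − δ_{jk}(1 + 2μⱼR̂ⱼ)Γ̂ᵢ^{(κ)}). -/

import Mathlib

open Complex BigOperators Finset

noncomputable section

variable {N : ℕ}

/-- Reflection of the `i`-th coordinate: `σᵢ(x)` flips the sign of `xᵢ`. -/
def flipC (i : Fin N) (x : Fin N → ℝ) : Fin N → ℝ := Function.update x i (-(x i))

/-- The reflection operator `R̂ᵢ f (x) = f (σᵢ x)`. -/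
def Rop (i : Fin N) (f : (Fin N → ℝ) → ℂ) : (Fin N → ℝ) → ℂ := fun x => f (flipC i x)

/-- The Dunkl derivative `Dᵢ f (x) = ∂ᵢ f(x) + (μᵢ/xᵢ)(f(x) - f(σᵢ x))`. -/
def Dop (μ : Fin N → ℝ) (i : Fin N) (f : (Fin N → ℝ) → ℂ) : (Fin N → ℝ) → ℂ :=
  fun x => fderiv ℝ f x (Pi.single i 1) + ((μ i : ℂ) / (x i : ℂ)) * (f x - f (flipC i x))

/-- The Dunkl momentum operator `π̂ᵢ = -iℏ Dᵢ`. -/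
def Pop (μ : Fin N → ℝ) (hb : ℝ) (i : Fin N) (f : (Fin N → ℝ) → ℂ) : (Fin N → ℝ) → ℂ :=
  fun x => -(Complex.I * (hb : ℂ)) * Dop μ i f x

/-- The Dunkl angular momentum operator `Λ̂ᵢⱼ = x̂ᵢ π̂ⱼ - x̂ⱼ π̂ᵢ`. -/
def Lam (μ : Fin N → ℝ) (hb : ℝ) (i j : Fin N) (f : (Fin N → ℝ) → ℂ) : (Fin N → ℝ) → ℂ :=
  fun x => (x i : ℂ) * Pop μ hb j f x - (x j : ℂ) * Pop μ hb i f x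

/-- The complement of the coordinate hyperplanes in `ℝ^N`. -/
def Udom (N : ℕ) : Set (Fin N → ℝ) := {x | ∀ i, x i ≠ 0}

/-- The curved Dunkl momentum
`Γ̂ᵢ^{(κ)} = (1 - κx̂²)π̂ᵢ + 2κx̂ᵢ(x̂·π̂ - iℏ Σⱼ μⱼ R̂ⱼ)`. -/
def Gam (μ : Fin N → ℝ) (hb κ : ℝ) (i : Fin N) (f : (Fin N → ℝ) → ℂ) : (Fin N → ℝ) → ℂ :=
  fun x => (1 - (κ : ℂ) * ∑ j, (x j : ℂ) ^ 2) * Pop μ hb i f x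
    + 2 * (κ : ℂ) * (x i : ℂ) *
      ((∑ j, (x j : ℂ) * Pop μ hb j f x)
        - Complex.I * (hb : ℂ) * ∑ j, (μ j : ℂ) * Rop j f x)

-- ### infrastructure

lemma isOpen_Udom' : IsOpen (Udom N) := by
  have h : Udom N = ⋂ i : Fin N, (fun x : Fin N → ℝ => x i) ⁻¹' {(0:ℝ)}ᶜ := by
    ext x; simp [Udom, Set.mem_iInter]
  rw [h]
  exact isOpen_iInter_of_finite fun i => isOpen_compl_singleton.preimage (continuous_apply i)

lemma flipC_apply (i : Fin N) (x : Fin N → ℝ) (m : Fin N) :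
    flipC i x m = if m = i then -(x i) else x m := Function.update_apply x i _ m

lemma flipC_mem {x : Fin N → ℝ} (hx : x ∈ Udom N) (i : Fin N) : flipC i x ∈ Udom N := by
  intro m
  rw [flipC_apply]
  split_ifs with h
  · subst h; simpa using hx m
  · exact hx m

lemma flipC_flipC (i : Fin N) (x : Fin N → ℝ) : flipC i (flipC i x) = x := by
  funext m
  by_cases h : m = i <;> simp [flipC_apply, h]

lemma flipC_comm (i j : Fin N) (x : Fin N → ℝ) : flipC i (flipC j x) = flipC j (flipC i x) := by
  by_cases hij : i = j
  · subst hij; rfl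
  · funext m
    by_cases h1 : m = i <;> by_cases h2 : m = j <;>
      simp [flipC_apply, h1, h2, hij, Ne.symm hij]

def flipCLM (i : Fin N) : (Fin N → ℝ) →L[ℝ] (Fin N → ℝ) :=
  ContinuousLinearMap.pi
    (fun m => if m = i then -(ContinuousLinearMap.proj i) else ContinuousLinearMap.proj m)

lemma flipCLM_apply (i : Fin N) (x : Fin N → ℝ) : flipCLM i x = flipC i x := by
  funext m
  by_cases h : m = i <;> simp [flipCLM, flipC_apply, h]

lemma Rop_eq_comp (i : Fin N) (f : (Fin N → ℝ) → ℂ) : Rop i f = f ∘ (flipCLM i) := by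
  funext y; simp [Rop, flipCLM_apply]

lemma flipC_single (i m : Fin N) :
    flipC i (Pi.single m (1:ℝ)) = (if i = m then (-1:ℝ) else 1) • (Pi.single m (1:ℝ) : Fin N → ℝ) := by
  funext l
  by_cases him : i = m
  · subst him
    by_cases h : l = i <;> simp [flipC_apply, h, Pi.single_apply]
  · by_cases h : l = i
    · subst h
      simp [flipC_apply, Pi.single_apply, Ne.symm him, him]
    · simp [flipC_apply, h, him]

-- smoothness layer
abbrev Sm {N : ℕ} (g : (Fin N → ℝ) → ℂ) : Prop := ContDiffOn ℝ (⊤ : ℕ∞) g (Udom N)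

lemma contDiff_coordC (l : Fin N) : ContDiff ℝ (⊤ : ℕ∞) (fun y : Fin N → ℝ => ((y l : ℝ) : ℂ)) :=
  Complex.ofRealCLM.contDiff.comp (ContinuousLinearMap.proj l : (Fin N → ℝ) →L[ℝ] ℝ).contDiff

lemma sm_coordC (l : Fin N) : Sm (fun y : Fin N → ℝ => ((y l : ℝ) : ℂ)) :=
  (contDiff_coordC l).contDiffOn

lemma sm_Rop {g : (Fin N → ℝ) → ℂ} (hg : Sm g) (l : Fin N) : Sm (Rop l g) := by
  rw [Rop_eq_comp]
  refine hg.comp ((flipCLM l).contDiff.contDiffOn) ?_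
  intro x hx
  simpa [flipCLM_apply] using flipC_mem hx l

lemma sm_pd {g : (Fin N → ℝ) → ℂ} (hg : Sm g) (m : Fin N) :
    Sm (fun y => fderiv ℝ g y (Pi.single m 1)) := by
  exact (hg.fderiv_of_isOpen isOpen_Udom' (by exact_mod_cast le_top)).clm_apply contDiffOn_const

lemma sm_invCoord (l : Fin N) : Sm (fun y : Fin N → ℝ => ((y l : ℝ) : ℂ)⁻¹) := by
  refine (sm_coordC l).inv ?_
  intro x hx
  exact Complex.ofReal_ne_zero.2 (hx l)

lemma sm_Dop {g : (Fin N → ℝ) → ℂ} (hg : Sm g) (μ : Fin N → ℝ) (m : Fin N) :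
    Sm (Dop μ m g) := by
  have h1 : Sm (fun y => fderiv ℝ g y (Pi.single m 1)) := sm_pd hg m
  have h2 : Sm (fun y : Fin N → ℝ => ((μ m : ℂ) / (y m : ℂ))) := by
    simpa [div_eq_mul_inv] using contDiffOn_const.mul (sm_invCoord m)
  exact h1.add (h2.mul (hg.sub (sm_Rop hg m)))

lemma diffAt {g : (Fin N → ℝ) → ℂ} (hg : Sm g) {x : Fin N → ℝ} (hx : x ∈ Udom N) :
    DifferentiableAt ℝ g x :=
  (hg.contDiffAt (isOpen_Udom'.mem_nhds hx)).differentiableAt (by simp)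

-- pointwise partial-derivative lemmas
lemma pd_add {g h : (Fin N → ℝ) → ℂ} {x : Fin N → ℝ} (hg : DifferentiableAt ℝ g x)
    (hh : DifferentiableAt ℝ h x) (m : Fin N) :
    fderiv ℝ (fun y => g y + h y) x (Pi.single m 1)
      = fderiv ℝ g x (Pi.single m 1) + fderiv ℝ h x (Pi.single m 1) := by
  rw [fderiv_fun_add hg hh]; rfl

lemma pd_sub {g h : (Fin N → ℝ) → ℂ} {x : Fin N → ℝ} (hg : DifferentiableAt ℝ g x)
    (hh : DifferentiableAt ℝ h x) (m : Fin N) :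
    fderiv ℝ (fun y => g y - h y) x (Pi.single m 1)
      = fderiv ℝ g x (Pi.single m 1) - fderiv ℝ h x (Pi.single m 1) := by
  rw [fderiv_fun_sub hg hh]; rfl

lemma pd_const_mul {g : (Fin N → ℝ) → ℂ} {x : Fin N → ℝ} (hg : DifferentiableAt ℝ g x)
    (c : ℂ) (m : Fin N) :
    fderiv ℝ (fun y => c * g y) x (Pi.single m 1) = c * fderiv ℝ g x (Pi.single m 1) := by
  rw [fderiv_const_mul hg c]; simp

lemma pd_mul {g h : (Fin N → ℝ) → ℂ} {x : Fin N → ℝ} (hg : DifferentiableAt ℝ g x)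
    (hh : DifferentiableAt ℝ h x) (m : Fin N) :
    fderiv ℝ (fun y => g y * h y) x (Pi.single m 1)
      = g x * fderiv ℝ h x (Pi.single m 1) + h x * fderiv ℝ g x (Pi.single m 1) := by
  rw [fderiv_fun_mul hg hh]; simp [smul_eq_mul]

lemma pd_sum {ι : Type*} (s : Finset ι) {F : ι → (Fin N → ℝ) → ℂ} {x : Fin N → ℝ}
    (hF : ∀ l ∈ s, DifferentiableAt ℝ (F l) x) (m : Fin N) :
    fderiv ℝ (fun y => ∑ l ∈ s, F l y) x (Pi.single m 1)
      = ∑ l ∈ s, fderiv ℝ (F l) x (Pi.single m 1) := by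
  rw [fderiv_fun_sum hF]; simp

lemma pd_coordC (l m : Fin N) (x : Fin N → ℝ) :
    fderiv ℝ (fun y : Fin N → ℝ => ((y l : ℝ) : ℂ)) x (Pi.single m 1)
      = if l = m then 1 else 0 := by
  have h : (fun y : Fin N → ℝ => ((y l : ℝ) : ℂ))
      = (Complex.ofRealCLM.comp (ContinuousLinearMap.proj l : (Fin N → ℝ) →L[ℝ] ℝ)) := rfl
  rw [h, ContinuousLinearMap.fderiv]
  simp only [ContinuousLinearMap.coe_comp', Function.comp_apply,
    ContinuousLinearMap.proj_apply, Pi.single_apply]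
  split_ifs <;> simp

lemma pd_Rop {g : (Fin N → ℝ) → ℂ} {x : Fin N → ℝ} (l : Fin N)
    (hg : DifferentiableAt ℝ g (flipC l x)) (m : Fin N) :
    fderiv ℝ (Rop l g) x (Pi.single m 1)
      = (if l = m then -1 else 1) * fderiv ℝ g (flipC l x) (Pi.single m 1) := by
  rw [Rop_eq_comp]
  have hflip : DifferentiableAt ℝ (flipCLM l : (Fin N → ℝ) → (Fin N → ℝ)) x :=
    (flipCLM l).differentiableAt
  have hg' : DifferentiableAt ℝ g (flipCLM l x) := by rwa [flipCLM_apply]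
  rw [fderiv_comp x hg' hflip, (flipCLM l).fderiv]
  have h1 : (flipCLM l) (Pi.single m (1:ℝ))
      = (if l = m then (-1:ℝ) else 1) • (Pi.single m (1:ℝ) : Fin N → ℝ) := by
    rw [flipCLM_apply]; exact flipC_single l m
  simp only [ContinuousLinearMap.coe_comp', Function.comp_apply, h1, map_smul, flipCLM_apply]
  split_ifs <;> simp

-- ### sign symbol
def eps (a b : Fin N) : ℂ := if a = b then -1 else 1

lemma eps_comm (a b : Fin N) : eps a b = eps b a := by
  unfold eps
  by_cases h : a = b
  · simp [h]
  · simp [h, Ne.symm h]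

lemma pd_invCoord {x : Fin N → ℝ} (l : Fin N) (hx : x l ≠ 0) (m : Fin N) :
    fderiv ℝ (fun y : Fin N → ℝ => ((y l : ℝ) : ℂ)⁻¹) x (Pi.single m 1)
      = (if l = m then (1:ℂ) else 0) * -(((x l : ℝ) : ℂ)^2)⁻¹ := by
  have hc : HasFDerivAt (fun y : Fin N → ℝ => ((y l : ℝ) : ℂ))
      (Complex.ofRealCLM.comp (ContinuousLinearMap.proj l : (Fin N → ℝ) →L[ℝ] ℝ)) x :=
    (Complex.ofRealCLM.comp (ContinuousLinearMap.proj l : (Fin N → ℝ) →L[ℝ] ℝ)).hasFDerivAt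
  have hinv : HasDerivAt (fun z : ℂ => z⁻¹) (-((((x l : ℝ) : ℂ))^2)⁻¹) (((x l : ℝ) : ℂ)) :=
    hasDerivAt_inv (Complex.ofReal_ne_zero.2 hx)
  have hcomp : HasFDerivAt (fun y : Fin N → ℝ => ((y l : ℝ) : ℂ)⁻¹)
      ((-((((x l : ℝ) : ℂ))^2)⁻¹) • (Complex.ofRealCLM.comp
        (ContinuousLinearMap.proj l : (Fin N → ℝ) →L[ℝ] ℝ))) x :=
    hinv.comp_hasFDerivAt x hc
  rw [hcomp.fderiv]
  simp only [ContinuousLinearMap.smul_apply, ContinuousLinearMap.coe_comp',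
    Function.comp_apply, ContinuousLinearMap.proj_apply, Pi.single_apply]
  split_ifs <;> simp [smul_eq_mul]

lemma sm_fderiv {g : (Fin N → ℝ) → ℂ} (hg : Sm g) :
    ContDiffOn ℝ ((⊤:ℕ∞) : WithTop ℕ∞) (fderiv ℝ g) (Udom N) :=
  hg.fderiv_of_isOpen isOpen_Udom' (by exact_mod_cast le_top)

lemma pd_swap {f : (Fin N → ℝ) → ℂ} (hf : Sm f) {x : Fin N → ℝ} (hx : x ∈ Udom N) (m l : Fin N) :
    fderiv ℝ (fun y => fderiv ℝ f y (Pi.single l 1)) x (Pi.single m 1)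
      = fderiv ℝ (fun y => fderiv ℝ f y (Pi.single m 1)) x (Pi.single l 1) := by
  have hct : ContDiffAt ℝ ((⊤:ℕ∞) : WithTop ℕ∞) f x := hf.contDiffAt (isOpen_Udom'.mem_nhds hx)
  have hsym : IsSymmSndFDerivAt ℝ f x := hct.isSymmSndFDerivAt (by rw [minSmoothness_of_isRCLikeNormedField]; exact WithTop.coe_le_coe.2 (le_top : ((2:ℕ∞)) ≤ ⊤))
  have hdf : DifferentiableAt ℝ (fderiv ℝ f) x :=
    ((sm_fderiv hf).contDiffAt (isOpen_Udom'.mem_nhds hx)).differentiableAt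
      (by simp)
  have key : ∀ v : Fin N → ℝ, fderiv ℝ (fun y => fderiv ℝ f y v) x
      = ((fderiv ℝ (fderiv ℝ f) x).flip v) := by
    intro v
    rw [fderiv_clm_apply hdf (differentiableAt_const v)]
    simp
  rw [key, key]
  simpa using hsym (Pi.single m 1) (Pi.single l 1)

-- ### Dop algebra
section DopAlg

variable {μ : Fin N → ℝ} {x : Fin N → ℝ} {g h f : (Fin N → ℝ) → ℂ}

lemma Dop_add (hg : DifferentiableAt ℝ g x) (hh : DifferentiableAt ℝ h x) (m : Fin N) :
    Dop μ m (fun y => g y + h y) x = Dop μ m g x + Dop μ m h x := by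
  simp only [Dop, pd_add hg hh]; ring

lemma Dop_sub (hg : DifferentiableAt ℝ g x) (hh : DifferentiableAt ℝ h x) (m : Fin N) :
    Dop μ m (fun y => g y - h y) x = Dop μ m g x - Dop μ m h x := by
  simp only [Dop, pd_sub hg hh]; ring

lemma Dop_const_mul (hg : DifferentiableAt ℝ g x) (c : ℂ) (m : Fin N) :
    Dop μ m (fun y => c * g y) x = c * Dop μ m g x := by
  simp only [Dop, pd_const_mul hg c]; ring

lemma Dop_sum {ι : Type*} (s : Finset ι) {F : ι → (Fin N → ℝ) → ℂ}
    (hF : ∀ l ∈ s, DifferentiableAt ℝ (F l) x) (m : Fin N) :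
    Dop μ m (fun y => ∑ l ∈ s, F l y) x = ∑ l ∈ s, Dop μ m (F l) x := by
  simp only [Dop, pd_sum s hF m]
  rw [Finset.sum_add_distrib, ← Finset.sum_sub_distrib, Finset.mul_sum]

lemma Dop_zero (m : Fin N) : Dop μ m (fun _ => (0:ℂ)) x = 0 := by
  simp [Dop, fderiv_const]

lemma Dop_Rop (hg : Sm g) (hx : x ∈ Udom N) (l m : Fin N) :
    Dop μ m (Rop l g) x = eps l m * Rop l (Dop μ m g) x := by
  have hgd : DifferentiableAt ℝ g (flipC l x) := diffAt hg (flipC_mem hx l)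
  by_cases hlm : l = m
  · subst hlm
    simp only [Dop, Rop, eps, if_pos rfl, pd_Rop l hgd, flipC_flipC, flipC_apply, if_pos rfl]
    push_cast
    ring
  · have hml : ¬ m = l := fun hh => hlm hh.symm
    simp only [Dop, Rop, eps, if_neg hlm, pd_Rop l hgd, flipC_apply, if_neg hml]
    rw [flipC_comm m l x]
    ring

lemma Dop_coord_mul (hg : Sm g) (hx : x ∈ Udom N) (m l : Fin N) :
    Dop μ m (fun y => ((y l : ℝ):ℂ) * g y) x
      = ((x l : ℝ):ℂ) * Dop μ m g x
        + (if m = l then g x + 2*(μ m:ℂ) * (Rop m g x) else 0) := by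
  have hgd := diffAt hg hx
  have hcd : DifferentiableAt ℝ (fun y : Fin N → ℝ => ((y l : ℝ):ℂ)) x :=
    ((contDiff_coordC l).differentiable (by simp)).differentiableAt
  by_cases hml : m = l
  · subst hml
    have hxm : ((x m:ℝ):ℂ) ≠ 0 := Complex.ofReal_ne_zero.2 (hx m)
    simp only [Dop, Rop, pd_mul hcd hgd, pd_coordC, if_pos rfl, flipC_apply]
    push_cast
    field_simp
    ring
  · have hlm : ¬ l = m := fun hh => hml hh.symm
    simp only [Dop, Rop, pd_mul hcd hgd, pd_coordC, if_neg hml, if_neg hlm, flipC_apply]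
    ring

lemma Dop_inv_mul (hg : Sm g) (hx : x ∈ Udom N) (l m : Fin N) (hml : m ≠ l) :
    Dop μ m (fun y => ((y l : ℝ):ℂ)⁻¹ * g y) x = ((x l : ℝ):ℂ)⁻¹ * Dop μ m g x := by
  have hgd := diffAt hg hx
  have hdinv : DifferentiableAt ℝ (fun y : Fin N → ℝ => ((y l : ℝ):ℂ)⁻¹) x :=
    diffAt (sm_invCoord l) hx
  have hlm : ¬ l = m := fun hh => hml hh.symm
  simp only [Dop, pd_mul hdinv hgd, pd_invCoord l (hx l) m, if_neg hlm, flipC_apply]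
  ring

-- the φ multiplier
def phiF (κ : ℝ) : (Fin N → ℝ) → ℂ := fun y => 1 - (κ:ℂ) * ∑ l, ((y l : ℝ):ℂ)^2

lemma contDiff_phiF (κ : ℝ) : ContDiff ℝ ((⊤:ℕ∞) : WithTop ℕ∞) (phiF (N := N) κ) :=
  contDiff_const.sub (contDiff_const.mul (ContDiff.sum fun l _ => (contDiff_coordC l).pow 2))

lemma phiF_flip (κ : ℝ) (m : Fin N) (x : Fin N → ℝ) : phiF κ (flipC m x) = phiF κ x := by
  unfold phiF
  have h : ∀ l : Fin N, (((flipC m x) l : ℝ):ℂ)^2 = ((x l : ℝ):ℂ)^2 := by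
    intro l
    by_cases hl : l = m <;> simp [flipC_apply, hl] <;> ring
  rw [Finset.sum_congr rfl (fun l _ => h l)]

lemma pd_sq (l m : Fin N) (x : Fin N → ℝ) :
    fderiv ℝ (fun y : Fin N → ℝ => ((y l : ℝ):ℂ)^2) x (Pi.single m 1)
      = if l = m then 2*((x l:ℝ):ℂ) else 0 := by
  have hcd : DifferentiableAt ℝ (fun y : Fin N → ℝ => ((y l : ℝ):ℂ)) x :=
    ((contDiff_coordC l).differentiable (by simp)).differentiableAt
  have h : (fun y : Fin N → ℝ => ((y l : ℝ):ℂ)^2)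
      = fun y => ((y l : ℝ):ℂ) * ((y l : ℝ):ℂ) := by funext y; ring
  rw [h, pd_mul hcd hcd, pd_coordC]
  split_ifs <;> ring

lemma pd_phiF (κ : ℝ) (x : Fin N → ℝ) (m : Fin N) :
    fderiv ℝ (phiF κ) x (Pi.single m 1) = -(2*(κ:ℂ)*((x m:ℝ):ℂ)) := by
  have hsq : ∀ l : Fin N, DifferentiableAt ℝ (fun y : Fin N → ℝ => ((y l : ℝ):ℂ)^2) x :=
    fun l => (((contDiff_coordC l).differentiable (by simp)).differentiableAt).pow 2
  have hsum : DifferentiableAt ℝ (fun y : Fin N → ℝ => ∑ l, ((y l : ℝ):ℂ)^2) x :=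
    DifferentiableAt.fun_sum (fun l _ => hsq l)
  unfold phiF
  rw [pd_sub (differentiableAt_const (1:ℂ)) (hsum.const_mul _) m,
    pd_const_mul hsum _ m, pd_sum univ (fun l _ => hsq l) m]
  have : ∑ l : Fin N, fderiv ℝ (fun y : Fin N → ℝ => ((y l : ℝ):ℂ)^2) x (Pi.single m 1)
      = 2*((x m:ℝ):ℂ) := by
    rw [Finset.sum_congr rfl (fun l _ => pd_sq l m x), Finset.sum_ite_eq' univ m]
    simp
  rw [this]
  simp [fderiv_const]
  ring

lemma Dop_phi_mul (κ : ℝ) (hg : Sm g) (hx : x ∈ Udom N) (m : Fin N) :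
    Dop μ m (fun y => phiF κ y * g y) x
      = -(2*(κ:ℂ)*((x m:ℝ):ℂ)) * g x + phiF κ x * Dop μ m g x := by
  have hphid : DifferentiableAt ℝ (phiF (N := N) κ) x :=
    ((contDiff_phiF κ).differentiable (by simp)).differentiableAt
  simp only [Dop, pd_mul hphid (diffAt hg hx), pd_phiF, phiF_flip]
  ring

lemma Dop_Dop_formula (hf : Sm f) (hx : x ∈ Udom N) (m l : Fin N) (hml : m ≠ l) :
    Dop μ m (Dop μ l f) x
      = fderiv ℝ (fun y => fderiv ℝ f y (Pi.single l 1)) x (Pi.single m 1)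
        + (μ l:ℂ)/((x l:ℝ):ℂ)
            * (fderiv ℝ f x (Pi.single m 1) - fderiv ℝ f (flipC l x) (Pi.single m 1))
        + (μ m:ℂ)/((x m:ℝ):ℂ)
            * (fderiv ℝ f x (Pi.single l 1) - fderiv ℝ f (flipC m x) (Pi.single l 1))
        + (μ m:ℂ)/((x m:ℝ):ℂ) * ((μ l:ℂ)/((x l:ℝ):ℂ))
            * ((f x - f (flipC l x)) - (f (flipC m x) - f (flipC l (flipC m x)))) := by
  have hlm : ¬ l = m := fun hh => hml hh.symm
  have hrw : Dop μ l f = fun y =>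
      (fun z => fderiv ℝ f z (Pi.single l 1)) y
        + (μ l:ℂ) * (((y l : ℝ):ℂ)⁻¹ * (f y - Rop l f y)) := by
    funext y
    simp only [Dop, Rop]
    ring
  have d1 : DifferentiableAt ℝ (fun z => fderiv ℝ f z (Pi.single l 1)) x :=
    diffAt (sm_pd hf l) hx
  have smfr : Sm (fun y => f y - Rop l f y) := hf.sub (sm_Rop hf l)
  have dinv : DifferentiableAt ℝ (fun y : Fin N → ℝ => ((y l : ℝ):ℂ)⁻¹) x :=
    diffAt (sm_invCoord l) hx
  have dfr : DifferentiableAt ℝ (fun y => f y - Rop l f y) x := diffAt smfr hx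
  have d2 : DifferentiableAt ℝ
      (fun y => (μ l:ℂ) * (((y l : ℝ):ℂ)⁻¹ * (f y - Rop l f y))) x :=
    (dinv.mul dfr).const_mul _
  rw [hrw, Dop_add d1 d2 m, Dop_const_mul (dinv.fun_mul dfr) _ m,
    Dop_inv_mul smfr hx l m hml,
    Dop_sub (diffAt hf hx) (diffAt (sm_Rop hf l) hx) m,
    Dop_Rop hf hx l m]
  simp only [Dop, Rop, eps, if_neg hlm, flipC_apply, if_neg hml]
  rw [flipC_comm m l x]
  ring

lemma Dop_comm (hf : Sm f) (hx : x ∈ Udom N) (m l : Fin N) :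
    Dop μ m (Dop μ l f) x = Dop μ l (Dop μ m f) x := by
  by_cases h : m = l
  · subst h; rfl
  · rw [Dop_Dop_formula hf hx m l h, Dop_Dop_formula hf hx l m (Ne.symm h),
      pd_swap hf hx m l, flipC_comm l m x]
    ring

end DopAlg

-- ### reduced operators
def Eo (μ : Fin N → ℝ) (g : (Fin N → ℝ) → ℂ) : (Fin N → ℝ) → ℂ :=
  fun y => (∑ l, ((y l : ℝ):ℂ) * Dop μ l g y) + ∑ l, (μ l:ℂ) * Rop l g y

def Go (μ : Fin N → ℝ) (κ : ℝ) (k : Fin N) (g : (Fin N → ℝ) → ℂ) : (Fin N → ℝ) → ℂ :=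
  fun y => phiF κ y * Dop μ k g y + 2*(κ:ℂ) * (((y k : ℝ):ℂ) * Eo μ g y)

def Lo (μ : Fin N → ℝ) (i j : Fin N) (g : (Fin N → ℝ) → ℂ) : (Fin N → ℝ) → ℂ :=
  fun y => ((y i : ℝ):ℂ) * Dop μ j g y - ((y j : ℝ):ℂ) * Dop μ i g y

section Red

variable {μ : Fin N → ℝ} {κ : ℝ} {x : Fin N → ℝ} {g f : (Fin N → ℝ) → ℂ}

lemma sm_phiF (κ : ℝ) : Sm (phiF (N := N) κ) := (contDiff_phiF κ).contDiffOn

lemma sm_Eo (hg : Sm g) : Sm (Eo μ g) :=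
  (ContDiffOn.sum fun l _ => (sm_coordC l).mul (sm_Dop hg μ l)).add
    (ContDiffOn.sum fun l _ => contDiffOn_const.mul (sm_Rop hg l))

lemma sm_Go (hg : Sm g) (k : Fin N) : Sm (Go μ κ k g) :=
  ((sm_phiF κ).mul (sm_Dop hg μ k)).add
    (contDiffOn_const.mul ((sm_coordC k).mul (sm_Eo hg)))

lemma sm_Lo (hg : Sm g) (i j : Fin N) : Sm (Lo μ i j g) :=
  ((sm_coordC i).mul (sm_Dop hg μ j)).sub ((sm_coordC j).mul (sm_Dop hg μ i))

lemma Rop_const_mul (l : Fin N) (c : ℂ) (g : (Fin N → ℝ) → ℂ) (x : Fin N → ℝ) :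
    Rop l (fun y => c * g y) x = c * Rop l g x := rfl

-- expansion of Dop applied to Eo
lemma Dop_Eo (hg : Sm g) (hx : x ∈ Udom N) (m : Fin N) :
    Dop μ m (Eo μ g) x
      = (∑ l, ((x l : ℝ):ℂ) * Dop μ l (Dop μ m g) x)
        + (Dop μ m g x + 2*(μ m:ℂ) * Rop m (Dop μ m g) x)
        + ((∑ l, (μ l:ℂ) * Rop l (Dop μ m g) x) - 2*(μ m:ℂ) * Rop m (Dop μ m g) x) := by
  have dA : ∀ l ∈ (univ : Finset (Fin N)),
      DifferentiableAt ℝ (fun y => ((y l : ℝ):ℂ) * Dop μ l g y) x :=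
    fun l _ => diffAt ((sm_coordC l).mul (sm_Dop hg μ l)) hx
  have dB : ∀ l ∈ (univ : Finset (Fin N)),
      DifferentiableAt ℝ (fun y => (μ l:ℂ) * Rop l g y) x :=
    fun l _ => diffAt (contDiffOn_const.mul (sm_Rop hg l)) hx
  have dA' : DifferentiableAt ℝ (fun y => ∑ l, ((y l : ℝ):ℂ) * Dop μ l g y) x :=
    DifferentiableAt.fun_sum dA
  have dB' : DifferentiableAt ℝ (fun y => ∑ l, (μ l:ℂ) * Rop l g y) x :=
    DifferentiableAt.fun_sum dB
  calc Dop μ m (Eo μ g) x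
      = Dop μ m (fun y => ∑ l, ((y l : ℝ):ℂ) * Dop μ l g y) x
          + Dop μ m (fun y => ∑ l, (μ l:ℂ) * Rop l g y) x := Dop_add dA' dB' m
    _ = (∑ l, Dop μ m (fun y => ((y l : ℝ):ℂ) * Dop μ l g y) x)
          + ∑ l, Dop μ m (fun y => (μ l:ℂ) * Rop l g y) x := by
        rw [Dop_sum univ dA m, Dop_sum univ dB m]
    _ = (∑ l, (((x l : ℝ):ℂ) * Dop μ m (Dop μ l g) x
            + (if m = l then Dop μ l g x + 2*(μ m:ℂ) * Rop m (Dop μ l g) x else 0)))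
          + ∑ l, (μ l:ℂ) * (eps l m * Rop l (Dop μ m g) x) := by
        refine congrArg₂ (· + ·) (Finset.sum_congr rfl fun l _ => ?_)
          (Finset.sum_congr rfl fun l _ => ?_)
        · exact Dop_coord_mul (sm_Dop hg μ l) hx m l
        · rw [Dop_const_mul (diffAt (sm_Rop hg l) hx) _ m, Dop_Rop hg hx l m]
    _ = _ := by
        rw [Finset.sum_add_distrib, Finset.sum_ite_eq univ m
          (fun l => Dop μ l g x + 2*(μ m:ℂ) * Rop m (Dop μ l g) x)]
        have hmu : ∑ l, (μ l:ℂ) * (eps l m * Rop l (Dop μ m g) x)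
            = (∑ l, (μ l:ℂ) * Rop l (Dop μ m g) x)
              - 2*(μ m:ℂ) * Rop m (Dop μ m g) x := by
          have h : ∀ l, (μ l:ℂ) * (eps l m * Rop l (Dop μ m g) x)
              = (μ l:ℂ) * Rop l (Dop μ m g) x
                - (if l = m then 2*(μ l:ℂ) * Rop l (Dop μ m g) x else 0) := by
            intro l
            unfold eps
            split_ifs with h
            · subst h; ring
            · ring
          rw [Finset.sum_congr rfl fun l _ => h l, Finset.sum_sub_distrib,
            Finset.sum_ite_eq' univ m (fun l => 2*(μ l:ℂ) * Rop l (Dop μ m g) x)]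
          simp
        rw [hmu]
        have hcs : ∑ l, ((x l : ℝ):ℂ) * Dop μ m (Dop μ l g) x
            = ∑ l, ((x l : ℝ):ℂ) * Dop μ l (Dop μ m g) x :=
          Finset.sum_congr rfl fun l _ => by rw [Dop_comm hg hx m l]
        rw [hcs]
        simp [mem_univ]

lemma Dop_Go (hg : Sm g) (hx : x ∈ Udom N) (m k : Fin N) :
    Dop μ m (Go μ κ k g) x
      = -(2*(κ:ℂ)*((x m : ℝ):ℂ)) * Dop μ k g x + phiF κ x * Dop μ m (Dop μ k g) x
        + 2*(κ:ℂ) * (((x k : ℝ):ℂ) * Dop μ m (Eo μ g) x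
            + (if m = k then Eo μ g x + 2*(μ m:ℂ) * Rop m (Eo μ g) x else 0)) := by
  have d1 : DifferentiableAt ℝ (fun y => phiF κ y * Dop μ k g y) x :=
    diffAt ((sm_phiF κ).mul (sm_Dop hg μ k)) hx
  have d2' : DifferentiableAt ℝ (fun y => ((y k : ℝ):ℂ) * Eo μ g y) x :=
    diffAt ((sm_coordC k).mul (sm_Eo hg)) hx
  have d2 : DifferentiableAt ℝ (fun y => 2*(κ:ℂ) * (((y k : ℝ):ℂ) * Eo μ g y)) x :=
    d2'.const_mul _
  calc Dop μ m (Go μ κ k g) x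
      = Dop μ m (fun y => phiF κ y * Dop μ k g y) x
          + Dop μ m (fun y => 2*(κ:ℂ) * (((y k : ℝ):ℂ) * Eo μ g y)) x := Dop_add d1 d2 m
    _ = (-(2*(κ:ℂ)*((x m : ℝ):ℂ)) * Dop μ k g x + phiF κ x * Dop μ m (Dop μ k g) x)
          + 2*(κ:ℂ) * Dop μ m (fun y => ((y k : ℝ):ℂ) * Eo μ g y) x := by
        rw [Dop_phi_mul κ (sm_Dop hg μ k) hx m, Dop_const_mul d2' _ m]
    _ = _ := by
        rw [Dop_coord_mul (sm_Eo hg) hx m k]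

lemma Dop_Lo (hg : Sm g) (hx : x ∈ Udom N) (m i j : Fin N) :
    Dop μ m (Lo μ i j g) x
      = (((x i : ℝ):ℂ) * Dop μ m (Dop μ j g) x
          + (if m = i then Dop μ j g x + 2*(μ m:ℂ) * Rop m (Dop μ j g) x else 0))
        - (((x j : ℝ):ℂ) * Dop μ m (Dop μ i g) x
          + (if m = j then Dop μ i g x + 2*(μ m:ℂ) * Rop m (Dop μ i g) x else 0)) := by
  have d1 : DifferentiableAt ℝ (fun y => ((y i : ℝ):ℂ) * Dop μ j g y) x :=
    diffAt ((sm_coordC i).mul (sm_Dop hg μ j)) hx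
  have d2 : DifferentiableAt ℝ (fun y => ((y j : ℝ):ℂ) * Dop μ i g y) x :=
    diffAt ((sm_coordC j).mul (sm_Dop hg μ i)) hx
  calc Dop μ m (Lo μ i j g) x
      = Dop μ m (fun y => ((y i : ℝ):ℂ) * Dop μ j g y) x
          - Dop μ m (fun y => ((y j : ℝ):ℂ) * Dop μ i g y) x := Dop_sub d1 d2 m
    _ = _ := by
        rw [Dop_coord_mul (sm_Dop hg μ j) hx m i, Dop_coord_mul (sm_Dop hg μ i) hx m j]

lemma Rop_Lo (l i j : Fin N) (g : (Fin N → ℝ) → ℂ) (x : Fin N → ℝ) :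
    Rop l (Lo μ i j g) x
      = ((x i : ℝ):ℂ) * (eps l i * Rop l (Dop μ j g) x)
        - ((x j : ℝ):ℂ) * (eps l j * Rop l (Dop μ i g) x) := by
  rw [eps_comm l i, eps_comm l j]
  by_cases h1 : i = l <;> by_cases h2 : j = l <;>
    simp [Rop, Lo, eps, flipC_apply, h1, h2] <;> push_cast <;> ring

lemma Rop_Go (m k : Fin N) (g : (Fin N → ℝ) → ℂ) (x : Fin N → ℝ) :
    Rop m (Go μ κ k g) x
      = phiF κ x * Rop m (Dop μ k g) x
        + 2*(κ:ℂ) * (eps k m * ((x k : ℝ):ℂ) * Rop m (Eo μ g) x) := by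
  by_cases h1 : k = m <;>
    simp [Rop, Go, eps, flipC_apply, phiF_flip, h1] <;> push_cast <;> ring

end Red

section Key

variable {x : Fin N → ℝ} {f : (Fin N → ℝ) → ℂ}

lemma eps_of_ne {a b : Fin N} (h : a ≠ b) : eps a b = 1 := if_neg h

lemma sum_mu_eps (μ : Fin N → ℝ) (c : Fin N → ℂ) (m : Fin N) :
    ∑ l, (μ l:ℂ) * (eps l m * c l) = (∑ l, (μ l:ℂ) * c l) - 2*(μ m:ℂ) * c m := by
  have h : ∀ l, (μ l:ℂ) * (eps l m * c l)
      = (μ l:ℂ) * c l - (if l = m then 2*(μ l:ℂ) * c l else 0) := by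
    intro l; unfold eps; split_ifs <;> ring
  rw [Finset.sum_congr rfl fun l _ => h l, Finset.sum_sub_distrib,
    Finset.sum_ite_eq' univ m (fun l => 2*(μ l:ℂ) * c l)]
  simp

lemma key (μ : Fin N → ℝ) (κ : ℝ) (hf : Sm f) (hx : x ∈ Udom N)
    (i j k : Fin N) (hij : i ≠ j) :
    Lo μ i j (Go μ κ k f) x - Go μ κ k (Lo μ i j f) x
      = -((if i = k then Go μ κ j f x + 2*(μ i:ℂ) * Rop i (Go μ κ j f) x else 0)
          - (if j = k then Go μ κ i f x + 2*(μ j:ℂ) * Rop j (Go μ κ i f) x else 0)) := by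
  -- expansion of D_m (Go_k f)
  have hDGo : ∀ m, Dop μ m (Go μ κ k f) x
      = -(2*(κ:ℂ)*((x m : ℝ):ℂ)) * Dop μ k f x + phiF κ x * Dop μ m (Dop μ k f) x
        + 2*(κ:ℂ) * (((x k : ℝ):ℂ) *
              ((∑ l, ((x l : ℝ):ℂ) * Dop μ l (Dop μ m f) x)
                + (Dop μ m f x + 2*(μ m:ℂ) * Rop m (Dop μ m f) x)
                + ((∑ l, (μ l:ℂ) * Rop l (Dop μ m f) x)
                    - 2*(μ m:ℂ) * Rop m (Dop μ m f) x))
            + (if m = k then Eo μ f x + 2*(μ m:ℂ) * Rop m (Eo μ f) x else 0)) := by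
    intro m
    rw [Dop_Go hf hx m k, Dop_Eo hf hx m]
  have hLHS1 : Lo μ i j (Go μ κ k f) x
      = ((x i : ℝ):ℂ) * Dop μ j (Go μ κ k f) x
        - ((x j : ℝ):ℂ) * Dop μ i (Go μ κ k f) x := rfl
  -- expansion of D_k (Lo f), with canonical ordering of second derivatives
  have hDLok : Dop μ k (Lo μ i j f) x
      = (((x i : ℝ):ℂ) * Dop μ j (Dop μ k f) x
          + (if k = i then Dop μ j f x + 2*(μ k:ℂ) * Rop k (Dop μ j f) x else 0))
        - (((x j : ℝ):ℂ) * Dop μ i (Dop μ k f) x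
          + (if k = j then Dop μ i f x + 2*(μ k:ℂ) * Rop k (Dop μ i f) x else 0)) := by
    rw [Dop_Lo hf hx k i j, Dop_comm hf hx k j, Dop_comm hf hx k i]
  -- expansion of Eo (Lo f)
  have e1 : ∑ l, ((x l : ℝ):ℂ) * Dop μ l (Lo μ i j f) x
      = ((x i : ℝ):ℂ) * (∑ l, ((x l : ℝ):ℂ) * Dop μ l (Dop μ j f) x)
        - ((x j : ℝ):ℂ) * (∑ l, ((x l : ℝ):ℂ) * Dop μ l (Dop μ i f) x)
        + (((x i : ℝ):ℂ) * (Dop μ j f x + 2*(μ i:ℂ) * Rop i (Dop μ j f) x)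
          - ((x j : ℝ):ℂ) * (Dop μ i f x + 2*(μ j:ℂ) * Rop j (Dop μ i f) x)) := by
    have h1 : ∀ l, ((x l : ℝ):ℂ) * Dop μ l (Lo μ i j f) x
        = (((x i : ℝ):ℂ) * (((x l : ℝ):ℂ) * Dop μ l (Dop μ j f) x)
            - ((x j : ℝ):ℂ) * (((x l : ℝ):ℂ) * Dop μ l (Dop μ i f) x))
          + ((if l = i then ((x l : ℝ):ℂ) * (Dop μ j f x + 2*(μ l:ℂ) * Rop l (Dop μ j f) x) else 0)
            - (if l = j then ((x l : ℝ):ℂ) * (Dop μ i f x + 2*(μ l:ℂ) * Rop l (Dop μ i f) x) else 0)) := by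
      intro l
      rw [Dop_Lo hf hx l i j]
      split_ifs <;> ring
    rw [Finset.sum_congr rfl fun l _ => h1 l]
    rw [Finset.sum_add_distrib, Finset.sum_sub_distrib, Finset.sum_sub_distrib,
      ← Finset.mul_sum, ← Finset.mul_sum,
      Finset.sum_ite_eq' univ i
        (fun l => ((x l : ℝ):ℂ) * (Dop μ j f x + 2*(μ l:ℂ) * Rop l (Dop μ j f) x)),
      Finset.sum_ite_eq' univ j
        (fun l => ((x l : ℝ):ℂ) * (Dop μ i f x + 2*(μ l:ℂ) * Rop l (Dop μ i f) x))]
    simp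
  have e2 : ∑ l, (μ l:ℂ) * Rop l (Lo μ i j f) x
      = ((x i : ℝ):ℂ) * ((∑ l, (μ l:ℂ) * Rop l (Dop μ j f) x)
            - 2*(μ i:ℂ) * Rop i (Dop μ j f) x)
        - ((x j : ℝ):ℂ) * ((∑ l, (μ l:ℂ) * Rop l (Dop μ i f) x)
            - 2*(μ j:ℂ) * Rop j (Dop μ i f) x) := by
    have h1 : ∀ l, (μ l:ℂ) * Rop l (Lo μ i j f) x
        = ((x i : ℝ):ℂ) * ((μ l:ℂ) * (eps l i * Rop l (Dop μ j f) x))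
          - ((x j : ℝ):ℂ) * ((μ l:ℂ) * (eps l j * Rop l (Dop μ i f) x)) := by
      intro l
      rw [Rop_Lo l i j f x]
      ring
    rw [Finset.sum_congr rfl fun l _ => h1 l, Finset.sum_sub_distrib,
      ← Finset.mul_sum, ← Finset.mul_sum,
      sum_mu_eps μ (fun l => Rop l (Dop μ j f) x) i,
      sum_mu_eps μ (fun l => Rop l (Dop μ i f) x) j]
  have hEoLo : Eo μ (Lo μ i j f) x
      = (∑ l, ((x l : ℝ):ℂ) * Dop μ l (Lo μ i j f) x)
        + ∑ l, (μ l:ℂ) * Rop l (Lo μ i j f) x := rfl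
  have hGoLo : Go μ κ k (Lo μ i j f) x
      = phiF κ x * Dop μ k (Lo μ i j f) x
        + 2*(κ:ℂ) * (((x k : ℝ):ℂ) * Eo μ (Lo μ i j f) x) := rfl
  -- right-hand side expansions
  have hGoj : Go μ κ j f x
      = phiF κ x * Dop μ j f x + 2*(κ:ℂ) * (((x j : ℝ):ℂ) * Eo μ f x) := rfl
  have hGoi : Go μ κ i f x
      = phiF κ x * Dop μ i f x + 2*(κ:ℂ) * (((x i : ℝ):ℂ) * Eo μ f x) := rfl
  have hRGoj : Rop i (Go μ κ j f) x
      = phiF κ x * Rop i (Dop μ j f) x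
        + 2*(κ:ℂ) * (eps j i * ((x j : ℝ):ℂ) * Rop i (Eo μ f) x) := Rop_Go i j f x
  have hRGoi : Rop j (Go μ κ i f) x
      = phiF κ x * Rop j (Dop μ i f) x
        + 2*(κ:ℂ) * (eps i j * ((x i : ℝ):ℂ) * Rop j (Eo μ f) x) := Rop_Go j i f x
  rw [hLHS1, hDGo j, hDGo i, hGoLo, hDLok, hEoLo, e1, e2, hGoj, hGoi, hRGoj, hRGoi,
    eps_of_ne (Ne.symm hij), eps_of_ne hij]
  by_cases hki : k = i
  · have hji : j ≠ i := Ne.symm hij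
    simp only [hki, eq_self_iff_true, if_true, if_neg hij, if_neg hji]
    ring
  · by_cases hkj : k = j
    · have hji : j ≠ i := Ne.symm hij
      simp only [hkj, eq_self_iff_true, if_true, if_neg hij, if_neg hji]
      ring
    · have h1 : i ≠ k := fun h => hki h.symm
      have h2 : j ≠ k := fun h => hkj h.symm
      simp only [if_neg hki, if_neg hkj, if_neg h1, if_neg h2]
      ring

end Key

section Link

variable {g f : (Fin N → ℝ) → ℂ} {x : Fin N → ℝ}

lemma Gam_eq (μ : Fin N → ℝ) (hb κ : ℝ) (k : Fin N) (f : (Fin N → ℝ) → ℂ) :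
    Gam μ hb κ k f = fun x => -(Complex.I * (hb:ℂ)) * Go μ κ k f x := by
  funext x
  have h1 : ∑ l, (x l:ℂ) * Pop μ hb l f x
      = -(Complex.I*(hb:ℂ)) * ∑ l, ((x l : ℝ):ℂ) * Dop μ l f x := by
    rw [Finset.mul_sum]
    exact Finset.sum_congr rfl fun l _ => by simp only [Pop]; ring
  rw [show Gam μ hb κ k f x
      = (1 - (κ:ℂ) * ∑ l, (x l:ℂ)^2) * Pop μ hb k f x
        + 2*(κ:ℂ)*(x k:ℂ) * ((∑ l, (x l:ℂ) * Pop μ hb l f x)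
            - Complex.I*(hb:ℂ) * ∑ l, (μ l:ℂ) * Rop l f x) from rfl, h1]
  simp only [Pop, Go, Eo, phiF]
  ring

lemma Lam_eq (μ : Fin N → ℝ) (hb : ℝ) (i j : Fin N) (g : (Fin N → ℝ) → ℂ) :
    Lam μ hb i j g = fun x => -(Complex.I * (hb:ℂ)) * Lo μ i j g x := by
  funext x
  simp only [Lam, Pop, Lo]
  ring

lemma Lo_const_mul (hg : DifferentiableAt ℝ g x) (μ : Fin N → ℝ) (i j : Fin N) (c : ℂ) :
    Lo μ i j (fun y => c * g y) x = c * Lo μ i j g x := by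
  simp only [Lo, Dop_const_mul hg c]
  ring

lemma Go_const_mul (hg : Sm g) (hx : x ∈ Udom N) (μ : Fin N → ℝ) (κ : ℝ) (k : Fin N) (c : ℂ) :
    Go μ κ k (fun y => c * g y) x = c * Go μ κ k g x := by
  have hd := diffAt hg hx
  have e0 : Eo μ (fun y => c * g y) x = c * Eo μ g x := by
    have h1 : ∀ l : Fin N, ((x l : ℝ):ℂ) * Dop μ l (fun y => c * g y) x
        = c * (((x l : ℝ):ℂ) * Dop μ l g x) := fun l => by rw [Dop_const_mul hd c l]; ring
    have h2 : ∀ l : Fin N, (μ l:ℂ) * Rop l (fun y => c * g y) x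
        = c * ((μ l:ℂ) * Rop l g x) := fun l => by rw [Rop_const_mul]; ring
    show (∑ l, ((x l : ℝ):ℂ) * Dop μ l (fun y => c * g y) x)
        + (∑ l, (μ l:ℂ) * Rop l (fun y => c * g y) x) = c * Eo μ g x
    rw [Finset.sum_congr rfl fun l _ => h1 l, Finset.sum_congr rfl fun l _ => h2 l,
      ← Finset.mul_sum, ← Finset.mul_sum]
    simp only [Eo]
    ring
  show phiF κ x * Dop μ k (fun y => c * g y) x
      + 2*(κ:ℂ) * (((x k : ℝ):ℂ) * Eo μ (fun y => c * g y) x) = c * Go μ κ k g x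
  rw [Dop_const_mul hd c k, e0]
  simp only [Go]
  ring

end Link

/-- The curved Dunkl momenta transform as a vector under the Dunkl angular momenta:
`[Λ̂ᵢⱼ, Γ̂ₖ^{(κ)}] = iℏ(δᵢₖ(1+2μᵢR̂ᵢ)Γ̂ⱼ^{(κ)} - δⱼₖ(1+2μⱼR̂ⱼ)Γ̂ᵢ^{(κ)})`. -/
theorem curved_dunkl_momenta_vector (N : ℕ) (hN : 2 ≤ N) (μ : Fin N → ℝ)
    (hb κ : ℝ) (hbpos : hb > 0)
    (f : (Fin N → ℝ) → ℂ) (hf : ContDiffOn ℝ (⊤ : ℕ∞) f (Udom N)) :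
    ∀ i j k : Fin N, ∀ x ∈ Udom N,
      Lam μ hb i j (Gam μ hb κ k f) x - Gam μ hb κ k (Lam μ hb i j f) x
        = Complex.I * (hb : ℂ) *
          ((if i = k then Gam μ hb κ j f x + 2 * (μ i : ℂ) * Rop i (Gam μ hb κ j f) x else 0)
          - (if j = k then Gam μ hb κ i f x + 2 * (μ j : ℂ) * Rop j (Gam μ hb κ i f) x else 0)) := by
  intro i j k x hx
  have hfSm : Sm f := hf.of_le (by simp)
  by_cases hij : i = j
  · subst hij
    have h1 : Lam μ hb i i (Gam μ hb κ k f) x = 0 := by simp [Lam]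
    have h2 : Lam μ hb i i f = fun _ => (0:ℂ) := by funext y; simp [Lam]
    have h3 : Gam μ hb κ k (fun _ => (0:ℂ)) x = 0 := by
      simp [Gam, Pop, Dop_zero, Rop]
    rw [h1, h2, h3]
    simp
  · have E1 : Lam μ hb i j (Gam μ hb κ k f) x
        = -(Complex.I * (hb:ℂ)) * Lo μ i j (Gam μ hb κ k f) x :=
      congrFun (Lam_eq μ hb i j (Gam μ hb κ k f)) x
    have E2 : Lo μ i j (Gam μ hb κ k f) x
        = -(Complex.I * (hb:ℂ)) * Lo μ i j (Go μ κ k f) x := by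
      rw [Gam_eq μ hb κ k f]
      exact Lo_const_mul (diffAt (sm_Go hfSm k) hx) μ i j _
    have E3 : Gam μ hb κ k (Lam μ hb i j f) x
        = -(Complex.I * (hb:ℂ)) * Go μ κ k (Lam μ hb i j f) x :=
      congrFun (Gam_eq μ hb κ k (Lam μ hb i j f)) x
    have E4 : Go μ κ k (Lam μ hb i j f) x
        = -(Complex.I * (hb:ℂ)) * Go μ κ k (Lo μ i j f) x := by
      rw [Lam_eq μ hb i j f]
      exact Go_const_mul (sm_Lo hfSm i j) hx μ κ k _
    have E5 : Gam μ hb κ j f x = -(Complex.I * (hb:ℂ)) * Go μ κ j f x :=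
      congrFun (Gam_eq μ hb κ j f) x
    have E6 : Gam μ hb κ i f x = -(Complex.I * (hb:ℂ)) * Go μ κ i f x :=
      congrFun (Gam_eq μ hb κ i f) x
    have E7 : Rop i (Gam μ hb κ j f) x
        = -(Complex.I * (hb:ℂ)) * Rop i (Go μ κ j f) x := by
      rw [Gam_eq μ hb κ j f]; rfl
    have E8 : Rop j (Gam μ hb κ i f) x
        = -(Complex.I * (hb:ℂ)) * Rop j (Go μ κ i f) x := by
      rw [Gam_eq μ hb κ i f]; rfl
    have hk := key μ κ hfSm hx i j k hij
    rw [E1, E2, E3, E4, E5, E6, E7, E8]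
    by_cases hik : i = k <;> by_cases hjk : j = k
    · exact absurd (hik.trans hjk.symm) hij
    · simp only [if_pos hik, if_neg hjk] at hk ⊢
      linear_combination ((-(Complex.I * (hb:ℂ)))^2) * hk
    · simp only [if_neg hik, if_pos hjk] at hk ⊢
      linear_combination ((-(Complex.I * (hb:ℂ)))^2) * hk
    · simp only [if_neg hik, if_neg hjk] at hk ⊢
      linear_combination ((-(Complex.I * (hb:ℂ)))^2) * hk

end
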